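/- Let ω ∈ ℤ[X] be a polynomial of degree k ≥ 2 and suppose there are reals s, t > 0 such that for every δ > 0 there is a constant C_δ with ∫₀¹∫₀¹ W_ω(u, v; N)^{2s} du dv ≤ C_δ·N^{2s − t + δ} for all positive integers N. Then for every 0 < α < 1 and every δ > 0 there is a constant C'_δ such that for all positive integers N, the Lebesgue measure of the set { y ∈ [0,1) : there exists x ∈ [0,1) with W_ω(x, y; N) ≥ N^α } is at most C'_δ·N^{2s(1−α) − t + 2 − α + δ}. -/

import Mathlib

open MeasureTheory Finset Polynomial

/-- `e(t) = exp(2πit)`. -/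
noncomputable def e (t : ℝ) : ℂ := Complex.exp (2 * Real.pi * Complex.I * t)

/-- The Weyl sum `S_ω(x, y; N) = ∑_{n=1}^{N} e(x·n + y·ω(n))`. -/
noncomputable def WeylS (ω : Polynomial ℤ) (x y : ℝ) (N : ℕ) : ℂ :=
  ∑ n ∈ Finset.Icc 1 N, e (x * (n : ℝ) + y * ((ω.eval (n : ℤ) : ℤ) : ℝ))

/-- `η(k)` from the paper. -/
def etaP (k : ℕ) : ℕ :=
  if 2 * k + 2 ≥ (Nat.sqrt (2 * k + 2)) ^ 2 + Nat.sqrt (2 * k + 2) then 0 else 1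

/-- `s₀(k)` from the paper. -/
def s0 (k : ℕ) : ℕ :=
  if k = 2 then 3 else if k = 3 then 5 else if k = 4 then 8 else if k = 5 then 12
  else if k = 6 then 18 else if k = 7 then 24 else if k = 8 then 31 else if k = 9 then 40
  else if k = 10 then 49 else k * (k - 1) / 2 + Nat.sqrt (2 * k + 2) - etaP k

/-- The completed sum
`W_ω(x, y; N) = ∑_{h=−N}^{N} (1/(|h|+1))·|∑_{n=1}^{N} e(h·n/N + x·n + y·ω(n))|`. -/
noncomputable def WeylW (ω : Polynomial ℤ) (x y : ℝ) (N : ℕ) : ℝ :=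
  ∑ h ∈ Finset.Icc (-(N : ℤ)) (N : ℤ), (1 / (|(h : ℝ)| + 1)) *
    ‖(∑ n ∈ Finset.Icc 1 N,
      e ((h : ℝ) * (n : ℝ) / (N : ℝ) + x * (n : ℝ) + y * ((ω.eval (n : ℤ) : ℤ) : ℝ)))‖

/-!
For fixed `y`, `x ↦ W_ω(x, y; N)` is Lipschitz with constant `L = 4πN²(1 + log (N + 1))`: each
inner sum moves by at most `2πN²|x - x'|`, and the weights `1/(|h|+1)` sum to a harmonic number.
So if `W_ω(x₀, y; N) ≥ N^α`, then `W_ω(·, y; N) ≥ N^α / 2` on a window of length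
`N^α / (2L)` inside `[0, 1]`, whence `∫₀¹ W_ω(u, y; N)^{2s} du ≥ N^α/(2L) · (N^α/2)^{2s}`.
Chebyshev's inequality for `y ↦ ∫₀¹ W_ω(u, y; N)^{2s} du` and the mean value bound with `δ/2`
give the estimate, the logarithm in `L` being absorbed into `N^{δ/2}`.
-/

open Real

lemma e_eq_exp_I_mul (t : ℝ) : e t = Complex.exp (Complex.I * ((2 * π * t : ℝ) : ℂ)) := by
  rw [e]; push_cast; ring_nf

lemma norm_e (t : ℝ) : ‖e t‖ = 1 := by
  rw [e_eq_exp_I_mul, Complex.norm_exp_I_mul_ofReal]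

lemma e_add (a b : ℝ) : e (a + b) = e a * e b := by
  simp only [e, ← Complex.exp_add]; push_cast; ring_nf

lemma norm_e_sub_e_le (a b : ℝ) : ‖e a - e b‖ ≤ 2 * π * |a - b| :=
  calc ‖e a - e b‖ = ‖e b * (e (a - b) - 1)‖ := by
        rw [mul_sub, ← e_add, mul_one, add_sub_cancel]
    _ = ‖e (a - b) - 1‖ := by rw [norm_mul, norm_e, one_mul]
    _ ≤ ‖2 * π * (a - b)‖ := by
        rw [e_eq_exp_I_mul]; exact Real.norm_exp_I_mul_ofReal_sub_one_le
    _ = 2 * π * |a - b| := by rw [Real.norm_eq_abs, abs_mul, abs_of_pos (by positivity)]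

lemma norm_sum_e_sub_sum_e_le {ι : Type*} (s : Finset ι) (θ θ' : ι → ℝ) :
    ‖∑ i ∈ s, e (θ i) - ∑ i ∈ s, e (θ' i)‖ ≤ 2 * π * ∑ i ∈ s, |θ i - θ' i| := by
  rw [← Finset.sum_sub_distrib, Finset.mul_sum]
  exact (norm_sum_le _ _).trans (Finset.sum_le_sum fun i _ => norm_e_sub_e_le _ _)

lemma sum_Icc_one_div_abs_add_one (N : ℕ) :
    ∑ h ∈ Icc (-(N : ℤ)) N, 1 / (|(h : ℝ)| + 1) = 2 * (harmonic (N + 1) : ℝ) - 1 := by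
  induction N with
  | zero => norm_num [harmonic]
  | succ N ih =>
    have hIcc : Icc (-((N + 1 : ℕ) : ℤ)) ((N + 1 : ℕ) : ℤ)
        = insert ((N : ℤ) + 1) (insert (-((N : ℤ) + 1)) (Icc (-(N : ℤ)) N)) := by
      ext h; simp only [mem_Icc, mem_insert]; omega
    rw [hIcc, sum_insert (by simp only [mem_insert, mem_Icc]; omega),
      sum_insert (by simp only [mem_Icc]; omega), ih, harmonic_succ (N + 1)]
    push_cast
    rw [abs_neg, abs_of_nonneg (by positivity : (0 : ℝ) ≤ N + 1)]
    field_simp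
    ring

lemma sum_Icc_one_div_abs_add_one_le (N : ℕ) :
    ∑ h ∈ Icc (-(N : ℤ)) N, 1 / (|(h : ℝ)| + 1) ≤ 2 * (1 + log (N + 1)) := by
  rw [sum_Icc_one_div_abs_add_one]
  have := harmonic_le_one_add_log (N + 1)
  push_cast at this
  linarith

lemma exists_one_add_log_le_mul_rpow {ε : ℝ} (hε : 0 < ε) :
    ∃ C : ℝ, 0 ≤ C ∧ ∀ N : ℕ, 0 < N → 1 + log (N + 1) ≤ C * (N : ℝ) ^ ε := by
  refine ⟨1 + 2 ^ ε / ε, by positivity, fun N hN => ?_⟩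
  have hN : (1 : ℝ) ≤ N := by exact_mod_cast hN
  have h1 : 1 ≤ (N : ℝ) ^ ε := one_le_rpow hN hε.le
  have hlog : log (N + 1) ≤ 2 ^ ε / ε * (N : ℝ) ^ ε :=
    calc log (N + 1) ≤ ((N : ℝ) + 1) ^ ε / ε := log_le_rpow_div (by positivity) hε
      _ ≤ (2 * N) ^ ε / ε := by gcongr; linarith
      _ = 2 ^ ε / ε * (N : ℝ) ^ ε := by rw [mul_rpow (by norm_num) (by positivity)]; ring
  linarith

lemma mul_rpow_le_integral_rpow_of_dist_le {g : ℝ → ℝ} {L lam p x₀ : ℝ} (hL : 0 < L)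
    (hg : ∀ u v, dist (g u) (g v) ≤ L * dist u v) (hg0 : ∀ u, 0 ≤ g u) (hlam : 0 ≤ lam)
    (hlamL : lam ≤ L) (hp : 0 ≤ p) (hx₀ : x₀ ∈ Set.Icc (0 : ℝ) 1) (hgx₀ : lam ≤ g x₀) :
    lam / (2 * L) * (lam / 2) ^ p ≤ ∫ x in (0 : ℝ)..1, g x ^ p := by
  set ℓ := lam / (2 * L)
  have hℓ0 : 0 ≤ ℓ := by positivity
  have hℓ1 : ℓ ≤ 1 / 2 := by rw [div_le_iff₀ (by positivity)]; linarith
  have hcont : Continuous fun x => g x ^ p := by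
    refine (LipschitzWith.of_dist_le_mul (K := L.toNNReal) fun u v => ?_).continuous.rpow_const
      fun _ => Or.inr hp
    rw [Real.coe_toNNReal _ hL.le]; exact hg u v
  -- the window `[a, a + ℓ] ⊆ [0, 1]` around `x₀`, on which `g ≥ lam / 2`
  set a := min x₀ (1 - ℓ)
  have ha0 : 0 ≤ a := le_min hx₀.1 (by linarith)
  have ha1 : a + ℓ ≤ 1 := by linarith [min_le_right x₀ (1 - ℓ)]
  have hlow : ∀ u ∈ Set.Icc a (a + ℓ), (lam / 2) ^ p ≤ g u ^ p := by
    intro u hu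
    have hux : dist u x₀ ≤ ℓ := by
      rw [Real.dist_eq, abs_le]
      constructor <;> cases min_choice x₀ (1 - ℓ) <;>
        linarith [hu.1, hu.2, hx₀.2, min_le_left x₀ (1 - ℓ)]
    have : L * ℓ = lam / 2 := by simp only [ℓ]; field_simp
    have := (hg x₀ u).trans (mul_le_mul_of_nonneg_left (dist_comm u x₀ ▸ hux) hL.le)
    rw [Real.dist_eq, abs_le] at this
    exact rpow_le_rpow (by positivity) (by linarith) hp
  calc lam / (2 * L) * (lam / 2) ^ p = ∫ _ in a..a + ℓ, (lam / 2) ^ p := by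
        rw [intervalIntegral.integral_const, smul_eq_mul, add_sub_cancel_left]
    _ ≤ ∫ x in a..a + ℓ, g x ^ p :=
        intervalIntegral.integral_mono_on (by linarith) intervalIntegrable_const
          (hcont.intervalIntegrable _ _) hlow
    _ ≤ ∫ x in (0 : ℝ)..1, g x ^ p :=
        intervalIntegral.integral_mono_interval ha0 (by linarith) ha1
          (ae_of_all _ fun u => rpow_nonneg (hg0 u) p) (hcont.intervalIntegrable _ _)

lemma volume_setOf_le_intervalIntegral_le {F : ℝ → ℝ → ℝ} (hF : Continuous (Function.uncurry F))
    (hF0 : ∀ x y, 0 ≤ F x y) {c : ℝ} (hc : 0 < c) :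
    volume {y | y ∈ Set.Ico (0 : ℝ) 1 ∧ c ≤ ∫ x in (0 : ℝ)..1, F x y} ≤
      ENNReal.ofReal ((∫ x in (0 : ℝ)..1, ∫ y in (0 : ℝ)..1, F x y) / c) := by
  set G := fun y => ∫ x in (0 : ℝ)..1, F x y
  have hG : Continuous G :=
    intervalIntegral.continuous_parametric_intervalIntegral_of_continuous'
      (f := fun y x => F x y) (hF.comp continuous_swap) 0 1
  have hG0 (y : ℝ) : 0 ≤ G y := intervalIntegral.integral_nonneg zero_le_one fun x _ => hF0 x y
  have hswap : ∫ x in (0 : ℝ)..1, ∫ y in (0 : ℝ)..1, F x y = ∫ y in Set.Icc (0 : ℝ) 1, G y := by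
    simp only [G, intervalIntegral.integral_of_le zero_le_one, integral_Icc_eq_integral_Ioc]
    refine integral_integral_swap ?_
    rw [Measure.prod_restrict]
    exact (hF.continuousOn.integrableOn_compact (isCompact_Icc.prod isCompact_Icc)).mono_set
      (Set.prod_mono Set.Ioc_subset_Icc_self Set.Ioc_subset_Icc_self)
  set μ := volume.restrict (Set.Icc (0 : ℝ) 1)
  have hmarkov : c * μ.real {y | c ≤ G y} ≤ ∫ y, G y ∂μ :=
    mul_meas_ge_le_integral_of_nonneg (ae_of_all _ hG0) hG.integrableOn_Icc c
  calc volume {y | y ∈ Set.Ico (0 : ℝ) 1 ∧ c ≤ G y} ≤ μ {y | c ≤ G y} := by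
        rw [Measure.restrict_apply' measurableSet_Icc]
        exact measure_mono fun y hy => ⟨hy.2, Set.Ico_subset_Icc_self hy.1⟩
    _ = ENNReal.ofReal (μ.real {y | c ≤ G y}) := (ofReal_measureReal).symm
    _ ≤ _ := ENNReal.ofReal_le_ofReal (by rw [hswap, le_div_iff₀ hc]; linarith)

lemma volume_setOf_exists_le_le {f : ℝ → ℝ → ℝ} (hf : Continuous (Function.uncurry f))
    (hf0 : ∀ x y, 0 ≤ f x y) {L lam p : ℝ} (hL : 0 < L)
    (hlip : ∀ x x' y, dist (f x y) (f x' y) ≤ L * dist x x') (hlam : 0 < lam) (hlamL : lam ≤ L)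
    (hp : 0 ≤ p) :
    volume {y | y ∈ Set.Ico (0 : ℝ) 1 ∧ ∃ x ∈ Set.Ico (0 : ℝ) 1, lam ≤ f x y} ≤
      ENNReal.ofReal ((∫ x in (0 : ℝ)..1, ∫ y in (0 : ℝ)..1, f x y ^ p) /
        (lam / (2 * L) * (lam / 2) ^ p)) := by
  refine (measure_mono ?_).trans
    (volume_setOf_le_intervalIntegral_le (F := fun x y => f x y ^ p)
      (hf.rpow_const fun _ => Or.inr hp) (fun x y => rpow_nonneg (hf0 x y) p) (by positivity))
  rintro y ⟨hy, x, hx, hxy⟩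
  exact ⟨hy, mul_rpow_le_integral_rpow_of_dist_le hL (fun u v => hlip u v y) (fun u => hf0 u y)
    hlam.le hlamL hp (Set.Ico_subset_Icc_self hx) hxy⟩

lemma weylW_nonneg (ω : ℤ[X]) (x y : ℝ) (N : ℕ) : 0 ≤ WeylW ω x y N :=
  sum_nonneg fun _ _ => by positivity

lemma continuous_weylW (ω : ℤ[X]) (N : ℕ) :
    Continuous (Function.uncurry fun x y => WeylW ω x y N) := by
  unfold WeylW e
  fun_prop

lemma dist_weylW_le (ω : ℤ[X]) (N : ℕ) (x x' y : ℝ) :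
    dist (WeylW ω x y N) (WeylW ω x' y N) ≤
      4 * π * N ^ 2 * (1 + log (N + 1)) * dist x x' := by
  set S : ℤ → ℝ → ℂ := fun h x => ∑ n ∈ Icc 1 N,
    e ((h : ℝ) * (n : ℝ) / (N : ℝ) + x * (n : ℝ) + y * ((ω.eval (n : ℤ) : ℤ) : ℝ))
  have hS (h : ℤ) : ‖S h x - S h x'‖ ≤ 2 * π * N ^ 2 * |x - x'| :=
    calc ‖S h x - S h x'‖ ≤ 2 * π * ∑ n ∈ Icc 1 N, |(x - x') * n| := by
          refine (norm_sum_e_sub_sum_e_le _ _ _).trans_eq ?_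
          congr 1; refine sum_congr rfl fun n _ => ?_; ring_nf
      _ ≤ 2 * π * ∑ n ∈ Icc 1 N, |x - x'| * N := by
          gcongr with n hn
          rw [abs_mul, Nat.abs_cast]
          gcongr
          exact_mod_cast (mem_Icc.mp hn).2
      _ = 2 * π * N ^ 2 * |x - x'| := by
          rw [sum_const, Nat.card_Icc, add_tsub_cancel_right, nsmul_eq_mul]; ring
  calc dist (WeylW ω x y N) (WeylW ω x' y N)
      = |∑ h ∈ Icc (-(N : ℤ)) N, 1 / (|(h : ℝ)| + 1) * (‖S h x‖ - ‖S h x'‖)| := by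
        simp only [Real.dist_eq, WeylW, S, mul_sub, sum_sub_distrib]
    _ ≤ ∑ h ∈ Icc (-(N : ℤ)) N, 1 / (|(h : ℝ)| + 1) * (2 * π * N ^ 2 * |x - x'|) := by
        refine (abs_sum_le_sum_abs _ _).trans (sum_le_sum fun h _ => ?_)
        rw [abs_mul, abs_of_pos (by positivity)]
        gcongr
        exact (abs_norm_sub_norm_le _ _).trans (hS h)
    _ ≤ 2 * (1 + log (N + 1)) * (2 * π * N ^ 2 * |x - x'|) := by
        rw [← sum_mul]; gcongr; exact sum_Icc_one_div_abs_add_one_le N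
    _ = 4 * π * N ^ 2 * (1 + log (N + 1)) * dist x x' := by rw [Real.dist_eq]; ring

lemma volume_setOf_rpow_le_weylW_le (ω : ℤ[X]) {N : ℕ} (hN : 0 < N) {α p : ℝ} (hα : α < 1)
    (hp : 0 ≤ p) :
    volume {y | y ∈ Set.Ico (0 : ℝ) 1 ∧ ∃ x ∈ Set.Ico (0 : ℝ) 1, (N : ℝ) ^ α ≤ WeylW ω x y N} ≤
      ENNReal.ofReal ((∫ x in (0 : ℝ)..1, ∫ y in (0 : ℝ)..1, WeylW ω x y N ^ p) *
        (8 * π * 2 ^ p * (1 + log (N + 1))) * (N : ℝ) ^ (2 - α * (1 + p))) := by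
  have hN1 : (1 : ℝ) ≤ N := by exact_mod_cast hN
  have hN0 : (0 : ℝ) < N := by positivity
  have hlog : 1 ≤ 1 + log (N + 1) := by linarith [log_nonneg (by linarith : (1 : ℝ) ≤ N + 1)]
  have hNL : (N : ℝ) ^ α ≤ 4 * π * N ^ 2 * (1 + log (N + 1)) := by
    have : (N : ℝ) ^ α ≤ N := by simpa using rpow_le_rpow_of_exponent_le hN1 hα.le
    have hN2 : (N : ℝ) ≤ N ^ 2 * (1 + log (N + 1)) := by nlinarith
    nlinarith [mul_le_mul_of_nonneg_right pi_gt_three.le (hN0.le.trans hN2)]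
  refine (volume_setOf_exists_le_le (continuous_weylW ω N) (fun x y => weylW_nonneg ω x y N)
    (by positivity) (dist_weylW_le ω N) (by positivity) hNL hp).trans_eq (congrArg _ ?_)
  rw [div_rpow (by positivity) zero_le_two, ← rpow_mul hN0.le, rpow_sub hN0, rpow_two,
    mul_one_add α p, rpow_add hN0]
  field_simp
  ring

theorem measure_of_large_values_projection_general
    (ω : Polynomial ℤ)
    (s t : ℝ) (hs : 0 < s)
    (hmean : ∀ δ : ℝ, 0 < δ → ∃ Cδ : ℝ, ∀ N : ℕ, 0 < N →
      (∫ u in (0 : ℝ)..1, ∫ v in (0 : ℝ)..1, WeylW ω u v N ^ (2 * s)) ≤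
        Cδ * (N : ℝ) ^ (2 * s - t + δ))
    (α : ℝ) (hα1 : α < 1) (δ : ℝ) (hδ : 0 < δ) :
    ∃ C' : ℝ, ∀ N : ℕ, 0 < N →
      volume {y : ℝ | y ∈ Set.Ico (0 : ℝ) 1 ∧
          ∃ x ∈ Set.Ico (0 : ℝ) 1, (N : ℝ) ^ α ≤ WeylW ω x y N} ≤
        ENNReal.ofReal (C' * (N : ℝ) ^ (2 * s * (1 - α) - t + 2 - α + δ)) := by
  obtain ⟨C, hC⟩ := hmean (δ / 2) (by positivity)
  obtain ⟨D, hD0, hD⟩ := exists_one_add_log_le_mul_rpow (half_pos hδ)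
  refine ⟨max C 0 * (8 * π * 2 ^ (2 * s) * D), fun N hN =>
    (volume_setOf_rpow_le_weylW_le ω hN hα1 (p := 2 * s) (by positivity)).trans
      (ENNReal.ofReal_le_ofReal ?_)⟩
  have hN0 : (0 : ℝ) < N := by exact_mod_cast hN
  have hI := (hC N hN).trans (mul_le_mul_of_nonneg_right (le_max_left C 0) (by positivity))
  have hlog : 0 ≤ 1 + log (N + 1) := by
    linarith [log_nonneg (by linarith : (1 : ℝ) ≤ N + 1)]
  have hexp : (N : ℝ) ^ (2 * s * (1 - α) - t + 2 - α + δ) =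
      N ^ (2 * s - t + δ / 2) * N ^ (δ / 2) * N ^ (2 - α * (1 + 2 * s)) := by
    rw [← rpow_add hN0, ← rpow_add hN0]; ring_nf
  calc _ ≤ max C 0 * N ^ (2 * s - t + δ / 2) * (8 * π * 2 ^ (2 * s) * (D * N ^ (δ / 2))) *
        (N : ℝ) ^ (2 - α * (1 + 2 * s)) := by gcongr; exact hD N hN
    _ = _ := by rw [hexp]; ring

theorem measure_of_large_values_projection
    (k : ℕ) (hk : 2 ≤ k) (ω : Polynomial ℤ) (hω : ω.natDegree = k)
    (s t : ℝ) (hs : 0 < s) (ht : 0 < t)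
    (hmean : ∀ δ : ℝ, 0 < δ → ∃ Cδ : ℝ, ∀ N : ℕ, 0 < N →
      (∫ u in (0 : ℝ)..1, ∫ v in (0 : ℝ)..1, WeylW ω u v N ^ (2 * s)) ≤
        Cδ * (N : ℝ) ^ (2 * s - t + δ))
    (α : ℝ) (hα0 : 0 < α) (hα1 : α < 1) (δ : ℝ) (hδ : 0 < δ) :
    ∃ C' : ℝ, ∀ N : ℕ, 0 < N →
      volume {y : ℝ | y ∈ Set.Ico (0 : ℝ) 1 ∧
          ∃ x ∈ Set.Ico (0 : ℝ) 1, (N : ℝ) ^ α ≤ WeylW ω x y N} ≤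
        ENNReal.ofReal (C' * (N : ℝ) ^ (2 * s * (1 - α) - t + 2 - α + δ)) :=
  measure_of_large_values_projection_general ω s t hs hmean α hα1 δ hδ
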